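/- In type C_l realized in ℝ^l (positive roots λ_i ± λ_j for i < j and 2λ_i), for any simple root α and any subset Θ of simple roots whose connected component containing the long simple root α_l = 2λ_l is of type C_k (k ≥ 3), the contribution Σ_{β ∈ Δ⁺, c_δ(β) ≠ 0} ⟨α∨, β⟩ from that component Δ is even, where δ is the unique root of Δ linked to α and c_δ(β) is the coefficient of δ in β. -/

import Mathlib

open RealInnerProductSpace

/-- The pairing `⟨α∨, β⟩ = 2⟨α,β⟩/⟨α,α⟩`. -/
noncomputable def pairing {V : Type*} [NormedAddCommGroup V] [InnerProductSpace ℝ V]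
    (α β : V) : ℝ := 2 * ⟪α, β⟫ / ⟪α, α⟫

/-- The reflection `r_α(β) = β − ⟨α∨, β⟩α`. -/
noncomputable def reflect {V : Type*} [NormedAddCommGroup V] [InnerProductSpace ℝ V]
    (α β : V) : V := β - pairing α β • α

/-- A (possibly non-reduced) root system in a real inner product space. -/
def IsRootSystem {V : Type*} [NormedAddCommGroup V] [InnerProductSpace ℝ V]
    (Φ : Finset V) : Prop :=
  (∀ α ∈ Φ, α ≠ 0) ∧ (∀ α ∈ Φ, ∀ β ∈ Φ, reflect α β ∈ Φ) ∧
  (∀ α ∈ Φ, ∀ β ∈ Φ, ∃ n : ℤ, pairing α β = n)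

/-- A choice of positive roots: for each root exactly one of `β`, `-β` is positive. -/
def IsPositiveSystem {V : Type*} [NormedAddCommGroup V] [InnerProductSpace ℝ V]
    (Φ ΦP : Finset V) : Prop :=
  ΦP ⊆ Φ ∧ ∀ β ∈ Φ, Xor' (β ∈ ΦP) (-β ∈ ΦP)

/-- A simple system: every positive root is a nonnegative integer combination of simple roots. -/
def IsSimpleSystem {V : Type*} [NormedAddCommGroup V] [InnerProductSpace ℝ V]
    (ΦP S : Finset V) : Prop :=
  S ⊆ ΦP ∧ ∀ β ∈ ΦP, ∃ c : V → ℕ, β = ∑ γ ∈ S, (c γ : ℝ) • γ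

/-! For `α = λ_a − λ_b` one has `⟪α, α⟫ = 2`, so `⟨α∨, β⟩ = β_a − β_b`. Hence each of the `k − 1` pairs
`λ_b ± λ_j` with `j > b` contributes `−1 − 1` and the long root `2λ_b` contributes `−2`: the sum is `−2k`. -/

open Finset in
theorem Fin.card_filter_lt_val {n : ℕ} (m : ℕ) : #{i : Fin n | m < i.val} = n - (m + 1) := by
  have h := card_filter_add_card_filter_not (s := (univ : Finset (Fin n)))
    (fun i : Fin n => i.val < m + 1)
  simp only [Fin.card_filter_val_lt, card_univ, Fintype.card_fin, not_lt, Nat.succ_le_iff] at h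
  omega

lemma pairing_single_sub_single {ι : Type*} [Fintype ι] [DecidableEq ι] {a b : ι} (hab : a ≠ b)
    (β : EuclideanSpace ℝ ι) :
    pairing (EuclideanSpace.single a (1 : ℝ) - EuclideanSpace.single b 1) β = β a - β b := by
  have hself : ⟪EuclideanSpace.single a (1 : ℝ) - EuclideanSpace.single b 1,
      EuclideanSpace.single a (1 : ℝ) - EuclideanSpace.single b 1⟫ = 2 := by
    rw [inner_sub_left, inner_sub_right, inner_sub_right]
    norm_num [EuclideanSpace.inner_single_left, hab, hab.symm]
  rw [pairing, hself, inner_sub_left, EuclideanSpace.inner_single_left,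
    EuclideanSpace.inner_single_left]
  simp

/-- In `C_l`, the contribution of a connected component `Δ` of type `C_k` (sitting at
the right end, containing the long root `α_l`) to the orientability sum is even:
for the simple root `α` linked to `δ = λ_{l−k} − λ_{l−k+1}`, the sum of `⟨α∨, β⟩`
over the positive roots `β` of `Δ` with nonzero coefficient on `δ` equals `−2k`. -/
theorem stmt17 (l k : ℕ) (hk : 3 ≤ k) (hkl : k < l) :
    ((∑ j ∈ Finset.univ.filter (fun j : Fin l => l - k < j.val),
        (pairing
          (EuclideanSpace.single (⟨l - k - 1, by omega⟩ : Fin l) (1 : ℝ)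
            - EuclideanSpace.single (⟨l - k, by omega⟩ : Fin l) (1 : ℝ))
          (EuclideanSpace.single (⟨l - k, by omega⟩ : Fin l) (1 : ℝ)
            - EuclideanSpace.single j (1 : ℝ)) +
         pairing
          (EuclideanSpace.single (⟨l - k - 1, by omega⟩ : Fin l) (1 : ℝ)
            - EuclideanSpace.single (⟨l - k, by omega⟩ : Fin l) (1 : ℝ))
          (EuclideanSpace.single (⟨l - k, by omega⟩ : Fin l) (1 : ℝ)
            + EuclideanSpace.single j (1 : ℝ))))
      + pairing
          (EuclideanSpace.single (⟨l - k - 1, by omega⟩ : Fin l) (1 : ℝ)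
            - EuclideanSpace.single (⟨l - k, by omega⟩ : Fin l) (1 : ℝ))
          ((2 : ℝ) • EuclideanSpace.single (⟨l - k, by omega⟩ : Fin l) (1 : ℝ))
      = -(2 * (k : ℝ)))
    ∧ ∃ m : ℤ,
      (∑ j ∈ Finset.univ.filter (fun j : Fin l => l - k < j.val),
        (pairing
          (EuclideanSpace.single (⟨l - k - 1, by omega⟩ : Fin l) (1 : ℝ)
            - EuclideanSpace.single (⟨l - k, by omega⟩ : Fin l) (1 : ℝ))
          (EuclideanSpace.single (⟨l - k, by omega⟩ : Fin l) (1 : ℝ)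
            - EuclideanSpace.single j (1 : ℝ)) +
         pairing
          (EuclideanSpace.single (⟨l - k - 1, by omega⟩ : Fin l) (1 : ℝ)
            - EuclideanSpace.single (⟨l - k, by omega⟩ : Fin l) (1 : ℝ))
          (EuclideanSpace.single (⟨l - k, by omega⟩ : Fin l) (1 : ℝ)
            + EuclideanSpace.single j (1 : ℝ))))
      + pairing
          (EuclideanSpace.single (⟨l - k - 1, by omega⟩ : Fin l) (1 : ℝ)
            - EuclideanSpace.single (⟨l - k, by omega⟩ : Fin l) (1 : ℝ))
          ((2 : ℝ) • EuclideanSpace.single (⟨l - k, by omega⟩ : Fin l) (1 : ℝ))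
      = 2 * m := by
  set a : Fin l := ⟨l - k - 1, by omega⟩
  set b : Fin l := ⟨l - k, by omega⟩
  have hab : a ≠ b := Fin.ne_of_val_ne (by simp only [a, b]; omega)
  have hpair : ∀ j ∈ Finset.univ.filter (fun j : Fin l => l - k < j.val),
      pairing (EuclideanSpace.single a (1 : ℝ) - EuclideanSpace.single b 1)
          (EuclideanSpace.single b 1 - EuclideanSpace.single j 1) +
        pairing (EuclideanSpace.single a (1 : ℝ) - EuclideanSpace.single b 1)
          (EuclideanSpace.single b 1 + EuclideanSpace.single j 1) = -2 := by
    intro j hj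
    rw [Finset.mem_filter] at hj
    have hja : a ≠ j := Fin.ne_of_val_ne (by simp only [a]; omega)
    have hjb : b ≠ j := Fin.ne_of_val_ne (by simp only [b]; omega)
    norm_num [pairing_single_sub_single hab, hab, hja, hjb]
  have hlong : pairing (EuclideanSpace.single a (1 : ℝ) - EuclideanSpace.single b 1)
      ((2 : ℝ) • EuclideanSpace.single b 1) = -2 := by
    simp [pairing_single_sub_single hab, hab]
  refine (fun hsum => ⟨hsum, -k, by rw [hsum]; push_cast; ring⟩) ?_
  rw [Finset.sum_congr rfl hpair, Finset.sum_const, Fin.card_filter_lt_val, hlong,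
    show l - (l - k + 1) = k - 1 by omega, nsmul_eq_mul, Nat.cast_sub (by omega)]
  push_cast
  ring
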